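/- arXiv:2009.00265 — 2 statements merged into one kernel-verified Lean document; each statement's English description precedes it below -/
import Mathlib

section
/- For all x, y in the unit disk B² ⊂ ℂ, (1/√2)·b_{B²,2}(x,y) ≤ s_{B²}(x,y) ≤ b_{B²,2}(x,y), where s is the triangular ratio metric and b_{B²,2} is the Barrlund metric with p = 2. -/
/-- Triangular ratio metric of the unit disk. -/
noncomputable def sB (x y : ℂ) : ℝ :=
  ‖x - y‖ /
    sInf ((fun z => ‖x - z‖ + ‖z - y‖) '' {z : ℂ | ‖z‖ = 1})

/-- Barrlund metric with parameter 2 of the unit disk (closed form). -/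
noncomputable def bB2 (x y : ℂ) : ℝ :=
  ‖x - y‖ /
    Real.sqrt (2 + ‖x‖ ^ 2 + ‖y‖ ^ 2 - 2 * ‖x + y‖)

/-! For `‖z‖ = 1` one has `‖x - z‖² + ‖z - y‖² = 2 + ‖x‖² + ‖y‖² - 2⟪x + y, z⟫`, which is minimal,
with value `Q = 2 + ‖x‖² + ‖y‖² - 2‖x + y‖`, at `z = (x + y) / ‖x + y‖`. Since
`a² + b² ≤ (a + b)² ≤ 2 (a² + b²)` for `a, b ≥ 0`, the infimum of `‖x - z‖ + ‖z - y‖` over the unit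
sphere lies between `√Q` and `√2 √Q`, and the two comparisons follow by dividing `‖x - y‖`. -/

open Real RealInnerProductSpace

section InnerProductSpace

variable {E : Type*} [NormedAddCommGroup E] [InnerProductSpace ℝ E]

lemma norm_sub_sq_add_norm_sub_sq_of_norm_eq_one (x y : E) {z : E} (hz : ‖z‖ = 1) :
    ‖x - z‖ ^ 2 + ‖z - y‖ ^ 2 = 2 + ‖x‖ ^ 2 + ‖y‖ ^ 2 - 2 * ⟪x + y, z⟫ := by
  rw [norm_sub_sq_real, norm_sub_sq_real, inner_add_left, real_inner_comm z y, hz]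
  ring

lemma le_norm_sub_sq_add_norm_sub_sq (x y : E) {z : E} (hz : ‖z‖ = 1) :
    2 + ‖x‖ ^ 2 + ‖y‖ ^ 2 - 2 * ‖x + y‖ ≤ ‖x - z‖ ^ 2 + ‖z - y‖ ^ 2 := by
  have h := real_inner_le_norm (x + y) z
  rw [hz, mul_one] at h
  rw [norm_sub_sq_add_norm_sub_sq_of_norm_eq_one x y hz]
  linarith

lemma exists_norm_eq_one_norm_sub_sq_add_norm_sub_sq_eq [Nontrivial E] (x y : E) :
    ∃ z : E, ‖z‖ = 1 ∧ ‖x - z‖ ^ 2 + ‖z - y‖ ^ 2 = 2 + ‖x‖ ^ 2 + ‖y‖ ^ 2 - 2 * ‖x + y‖ := by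
  suffices ∃ z : E, ‖z‖ = 1 ∧ ⟪x + y, z⟫ = ‖x + y‖ by
    obtain ⟨z, hz, hinner⟩ := this
    exact ⟨z, hz, by rw [norm_sub_sq_add_norm_sub_sq_of_norm_eq_one x y hz, hinner]⟩
  rcases eq_or_ne (x + y) 0 with hxy | hxy
  · obtain ⟨z, hz⟩ := exists_norm_eq E zero_le_one
    exact ⟨z, hz, by simp [hxy]⟩
  · have hnorm : ‖x + y‖ ≠ 0 := norm_ne_zero_iff.mpr hxy
    refine ⟨‖x + y‖⁻¹ • (x + y), ?_, ?_⟩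
    · rw [norm_smul, norm_inv, norm_norm, inv_mul_cancel₀ hnorm]
    · rw [real_inner_smul_right, real_inner_self_eq_norm_sq]
      field_simp

lemma sqrt_le_norm_sub_add_norm_sub (x y : E) {z : E} (hz : ‖z‖ = 1) :
    √(2 + ‖x‖ ^ 2 + ‖y‖ ^ 2 - 2 * ‖x + y‖) ≤ ‖x - z‖ + ‖z - y‖ := by
  refine sqrt_le_iff.mpr ⟨by positivity, ?_⟩
  nlinarith [le_norm_sub_sq_add_norm_sub_sq x y hz, norm_nonneg (x - z), norm_nonneg (z - y)]

lemma sqrt_le_sInf_norm_sub_add_norm_sub [Nontrivial E] (x y : E) :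
    √(2 + ‖x‖ ^ 2 + ‖y‖ ^ 2 - 2 * ‖x + y‖) ≤
      sInf ((fun z => ‖x - z‖ + ‖z - y‖) '' {z : E | ‖z‖ = 1}) := by
  obtain ⟨z₀, hz₀⟩ := exists_norm_eq E zero_le_one
  refine le_csInf ⟨_, z₀, hz₀, rfl⟩ ?_
  rintro _ ⟨z, hz, rfl⟩
  exact sqrt_le_norm_sub_add_norm_sub x y hz

lemma sInf_norm_sub_add_norm_sub_le_sqrt_two_mul [Nontrivial E] (x y : E) :
    sInf ((fun z => ‖x - z‖ + ‖z - y‖) '' {z : E | ‖z‖ = 1}) ≤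
      √2 * √(2 + ‖x‖ ^ 2 + ‖y‖ ^ 2 - 2 * ‖x + y‖) := by
  obtain ⟨z, hz, hsum⟩ := exists_norm_eq_one_norm_sub_sq_add_norm_sub_sq_eq x y
  have hbdd : BddBelow ((fun z => ‖x - z‖ + ‖z - y‖) '' {z : E | ‖z‖ = 1}) := by
    refine ⟨0, ?_⟩
    rintro _ ⟨w, -, rfl⟩
    positivity
  refine (csInf_le hbdd ⟨z, hz, rfl⟩).trans ?_
  rw [← sqrt_mul zero_le_two]
  refine le_sqrt_of_sq_le ?_
  rw [← hsum]
  nlinarith [sq_nonneg (‖x - z‖ - ‖z - y‖)]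

end InnerProductSpace

lemma barrlund_radicand_pos {E : Type*} [SeminormedAddCommGroup E] (y : E) {x : E}
    (hx : ‖x‖ ≠ 1) : 0 < 2 + ‖x‖ ^ 2 + ‖y‖ ^ 2 - 2 * ‖x + y‖ := by
  -- by the triangle inequality the radicand is at least `(1 - ‖x‖)² + (1 - ‖y‖)²`
  have hx_sq : 0 < (1 - ‖x‖) ^ 2 := sq_pos_of_ne_zero (sub_ne_zero.mpr hx.symm)
  nlinarith [norm_add_le x y, sq_nonneg (1 - ‖y‖)]

theorem stmt_3_general (x y : ℂ) (hx : ‖x‖ < 1) :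
    (1 / Real.sqrt 2) * bB2 x y ≤ sB x y ∧ sB x y ≤ bB2 x y := by
  have hpos : 0 < √(2 + ‖x‖ ^ 2 + ‖y‖ ^ 2 - 2 * ‖x + y‖) :=
    sqrt_pos.mpr (barrlund_radicand_pos y hx.ne)
  have hlow := sqrt_le_sInf_norm_sub_add_norm_sub x y
  have hup := sInf_norm_sub_add_norm_sub_le_sqrt_two_mul x y
  unfold sB bB2
  constructor
  · rw [div_mul_div_comm, one_mul]
    exact div_le_div_of_nonneg_left (norm_nonneg _) (hpos.trans_le hlow) hup
  · exact div_le_div_of_nonneg_left (norm_nonneg _) hpos hlow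

theorem stmt_3 (x y : ℂ) (hx : ‖x‖ < 1) (hy : ‖y‖ < 1) :
    (1 / Real.sqrt 2) * bB2 x y ≤ sB x y ∧ sB x y ≤ bB2 x y :=
  stmt_3_general x y hx
end

section
/- For all x, y in the unit disk B² ⊂ ℂ, (1/√2)·b_{B²,2}(x,y) ≤ p_{B²}(x,y) ≤ ((√10 + √2)/4)·b_{B²,2}(x,y). -/
/-- The point pair function of the unit disk. -/
noncomputable def pB (x y : ℂ) : ℝ :=
  ‖x - y‖ /
    Real.sqrt (‖x - y‖ ^ 2 + 4 * (1 - ‖x‖) * (1 - ‖y‖))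

/-! Write `a = ‖x‖`, `b = ‖y‖`, `s = ‖x + y‖`, `d = ‖x - y‖`, and let `P = d² + 4(1-a)(1-b)` and
`Q = 2 + a² + b² - 2s` be the radicands in `pB` and `bB2`. The two inequalities amount to
`P ≤ 2Q` and `Q ≤ c²P` with `c² = ((√10 + √2)/4)² = (3 + √5)/4`. The parallelogram law
`d² = 2(a² + b²) - s²` turns both into statements about `a, b ∈ [0, 1]` and
`s ∈ [|a - b|, a + b]`. The first is `(2 - s)² ≥ (2 - a - b)² ≥ 4(1-a)(1-b)`. In the second,
`(3 + √5)P - 4Q` is a concave quadratic in `s`, so it suffices to check it at `s = a + b` and at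
`s = |a - b|`; the latter is where `√5` is sharp. -/

lemma nonneg_of_concave_quadratic {α β γ u v s : ℝ} (hα : 0 ≤ α)
    (hu : 0 ≤ -α * u ^ 2 + β * u + γ) (hv : 0 ≤ -α * v ^ 2 + β * v + γ)
    (hus : u ≤ s) (hsv : s ≤ v) : 0 ≤ -α * s ^ 2 + β * s + γ := by
  rcases hus.eq_or_lt with rfl | hus'
  · exact hu
  have hinterp : (v - u) * (-α * s ^ 2 + β * s + γ) =
      (v - s) * (-α * u ^ 2 + β * u + γ) + (s - u) * (-α * v ^ 2 + β * v + γ)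
        + α * (v - s) * (s - u) * (v - u) := by ring
  refine nonneg_of_mul_nonneg_right (a := v - u) ?_ (by linarith)
  rw [hinterp]
  have := mul_nonneg (sub_nonneg.2 hsv) hu
  have := mul_nonneg (sub_nonneg.2 hus) hv
  have := mul_nonneg (mul_nonneg (mul_nonneg hα (sub_nonneg.2 hsv)) (sub_nonneg.2 hus))
    (sub_nonneg.2 (hus.trans hsv))
  linarith

section Radicands

variable {a b s d : ℝ}

lemma sq_add_four_mul_le_two_mul (hpar : d ^ 2 + s ^ 2 = 2 * (a ^ 2 + b ^ 2))
    (ha : a ≤ 1) (hb : b ≤ 1) (hs : s ≤ a + b) :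
    d ^ 2 + 4 * (1 - a) * (1 - b) ≤ 2 * (2 + a ^ 2 + b ^ 2 - 2 * s) := by
  have h2s : (2 - a - b) ^ 2 ≤ (2 - s) ^ 2 := pow_le_pow_left₀ (by linarith) (by linarith) 2
  nlinarith [sq_nonneg (a - b)]

lemma four_mul_le_three_add_sqrt_five_mul (hpar : d ^ 2 + s ^ 2 = 2 * (a ^ 2 + b ^ 2))
    (ha₀ : 0 ≤ a) (ha₁ : a ≤ 1) (hb₀ : 0 ≤ b) (hb₁ : b ≤ 1) (hs₀ : |a - b| ≤ s) (hs₁ : s ≤ a + b) :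
    4 * (2 + a ^ 2 + b ^ 2 - 2 * s) ≤ (3 + √5) * (d ^ 2 + 4 * (1 - a) * (1 - b)) := by
  set k := √5
  have hk : k ^ 2 = 5 := Real.sq_sqrt (by norm_num)
  have hk₁ : 1 ≤ k := by nlinarith [Real.sqrt_nonneg 5]
  have hk₃ : k ≤ 3 := by nlinarith [Real.sqrt_nonneg 5]
  set γ := (3 + k) * (2 * (a ^ 2 + b ^ 2) + 4 * (1 - a) * (1 - b)) - 4 * (2 + a ^ 2 + b ^ 2)
  suffices 0 ≤ -(3 + k) * s ^ 2 + 8 * s + γ by linear_combination this - (3 + k) * hpar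
  refine nonneg_of_concave_quadratic (by positivity) ?_ ?_ hs₀ hs₁
  · set t := |a - b|
    have ht₀ : 0 ≤ t := abs_nonneg _
    have ht₁ : t ≤ 1 := abs_sub_le_iff.2 ⟨by linarith, by linarith⟩
    have ht : t ^ 2 = (a - b) ^ 2 := sq_abs _
    -- equality at `a = b = (√5 - 1) / 2`
    have hid : -(3 + k) * t ^ 2 + 8 * t + γ =
        (2 * k + 4) * (a + b - k + 1) ^ 2 + t * (8 - (k + 5) * t) := by
      linear_combination 2 * ht + (4 * (a + b) - 2 * k) * hk
    rw [hid]
    have : 0 ≤ 8 - (k + 5) * t := by nlinarith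
    positivity
  · nlinarith [mul_nonneg (sub_nonneg.2 ha₁) (sub_nonneg.2 hb₁)]

end Radicands

lemma div_sqrt_le_mul_div_sqrt {d P Q c : ℝ} (hd : 0 ≤ d) (hP : 0 < P) (hQ : 0 < Q) (hc : 0 ≤ c)
    (h : Q ≤ c ^ 2 * P) : d / √P ≤ c * (d / √Q) := by
  have hsqrt : √Q ≤ c * √P := by
    simpa [Real.sqrt_mul (sq_nonneg c), Real.sqrt_sq hc] using Real.sqrt_le_sqrt h
  rw [mul_div_assoc', div_le_div_iff₀ (Real.sqrt_pos.2 hP) (Real.sqrt_pos.2 hQ)]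
  linarith [mul_le_mul_of_nonneg_left hsqrt hd]

lemma sq_sqrt_ten_add_sqrt_two_div_four : ((√10 + √2) / 4) ^ 2 = (3 + √5) / 4 := by
  have h10 : √10 = √2 * √5 := by rw [← Real.sqrt_mul (by norm_num)]; norm_num
  have h2 : √2 ^ 2 = 2 := Real.sq_sqrt (by norm_num)
  have h5 : √5 ^ 2 = 5 := Real.sq_sqrt (by norm_num)
  rw [h10]
  linear_combination ((√5 + 1) ^ 2 / 16) * h2 + (1 / 8) * h5

theorem stmt_5 (x y : ℂ) (hx : ‖x‖ < 1) (hy : ‖y‖ < 1) :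
    (1 / Real.sqrt 2) * bB2 x y ≤ pB x y ∧
      pB x y ≤ ((Real.sqrt 10 + Real.sqrt 2) / 4) * bB2 x y := by
  have hpar : ‖x - y‖ ^ 2 + ‖x + y‖ ^ 2 = 2 * (‖x‖ ^ 2 + ‖y‖ ^ 2) := by
    linarith [parallelogram_law_with_norm ℝ x y]
  have hs₀ : |‖x‖ - ‖y‖| ≤ ‖x + y‖ := by simpa using abs_norm_sub_norm_le x (-y)
  have hs₁ : ‖x + y‖ ≤ ‖x‖ + ‖y‖ := norm_add_le x y
  have hP : 0 < ‖x - y‖ ^ 2 + 4 * (1 - ‖x‖) * (1 - ‖y‖) := by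
    have := mul_pos (sub_pos.2 hx) (sub_pos.2 hy)
    positivity
  have hPQ := sq_add_four_mul_le_two_mul hpar hx.le hy.le hs₁
  have hQ : 0 < 2 + ‖x‖ ^ 2 + ‖y‖ ^ 2 - 2 * ‖x + y‖ := by linarith
  unfold pB bB2
  constructor
  · rw [one_div, inv_mul_le_iff₀ (by positivity)]
    exact div_sqrt_le_mul_div_sqrt (norm_nonneg _) hQ hP (by positivity)
      (by rw [Real.sq_sqrt zero_le_two]; linarith)
  · refine div_sqrt_le_mul_div_sqrt (norm_nonneg _) hP hQ (by positivity) ?_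
    rw [sq_sqrt_ten_add_sqrt_two_div_four]
    linarith [four_mul_le_three_add_sqrt_five_mul hpar (norm_nonneg x) hx.le (norm_nonneg y) hy.le
      hs₀ hs₁]
end
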